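/- Let ψ be a finite-horizon choice function and let u, u' be leaf evaluation functions with ‖u − u'‖_∞ ≤ ε. Then for any state path p;s with |p;s| ≤ h(ψ), we have |V^ψ_u(p;s) − V^ψ_{u'}(p;s)| ≤ ε · γ^(h(ψ) − |p;s|). -/
import Mathlib


open Finset

/-- A finite Markov Decision Process with transition kernel `P` and reward `R`. -/
structure MDP (S A : Type) [Fintype S] where
  P : S → A → S → ℝ
  R : S → A → ℝ
  P_nonneg : ∀ s a s', 0 ≤ P s a s'
  P_sum : ∀ s a, ∑ s', P s a s' = 1

/-- A state path: a root state followed by an alternating list of actions and states. -/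
abbrev SPath (S A : Type) := S × List (A × S)

variable {S A : Type}

/-- The current (last) state of a path. -/
def curS (p : SPath S A) : S := (p.2.getLast?.map Prod.snd).getD p.1

/-- Extend a path by an action and a successor state. -/
def extP (p : SPath S A) (a : A) (s' : S) : SPath S A := (p.1, p.2 ++ [(a, s')])

/-- Remove the first state-action pair of a path (identity on length-0 paths). -/
def dropFirst (p : SPath S A) : SPath S A :=
  match p with
  | (s₀, []) => (s₀, [])
  | (_, (_, s₁) :: rest) => (s₁, rest)

/-- The length-zero path consisting of a single root state. -/
def rootP (s : S) : SPath S A := (s, ([] : List (A × S)))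

/-- `p` is ψ-satisfying: every action along the path is allowed by ψ at the
corresponding prefix. -/
def SatCF (ψ : SPath S A → Finset A) (p : SPath S A) : Prop :=
  ∀ n (h : n < p.2.length), (p.2.get ⟨n, h⟩).1 ∈ ψ (p.1, p.2.take n)

/-- ψ is π-consistent: π's action is allowed at every non-leaf node. -/
def ConsistentCF (ψ : SPath S A → Finset A) (π : S → A) : Prop :=
  ∀ p, (ψ p).Nonempty → π (curS p) ∈ ψ p

/-- ψ is monotonic: `ψ(p;s) ⊆ ψ(⌟p;s)`. -/
def MonoCF (ψ : SPath S A → Finset A) : Prop :=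
  ∀ p : SPath S A, ψ p ⊆ ψ (dropFirst p)

/-- ψ has horizon at most H: every ψ-satisfying path of length ≥ H is a leaf. -/
def HorizonLE (ψ : SPath S A → Finset A) (H : ℕ) : Prop :=
  ∀ p : SPath S A, SatCF ψ p → H ≤ p.2.length → ψ p = ∅

/-- every leaf path of ψ has length at least h (min-horizon lower bound). -/
def MinLeaf (ψ : SPath S A → Finset A) (h : ℕ) : Prop :=
  ∀ p : SPath S A, SatCF ψ p → ψ p = ∅ → h ≤ p.2.length

variable [Fintype S] [Fintype A]

/-- Tree value with explicit fuel (remaining depth). -/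
noncomputable def treeVal (M : MDP S A) (γ : ℝ) (ψ : SPath S A → Finset A)
    (u : S → ℝ) : ℕ → SPath S A → ℝ
  | 0, p => u (curS p)
  | n + 1, p =>
      if h : (ψ p).Nonempty then
        (ψ p).sup' h fun a =>
          M.R (curS p) a + γ * ∑ s', M.P (curS p) a s' * treeVal M γ ψ u n (extP p a s')
      else u (curS p)

/-- `V^ψ_u(p;s)` for a choice function ψ of horizon H. -/
noncomputable def Vt (M : MDP S A) (γ : ℝ) (ψ : SPath S A → Finset A)
    (u : S → ℝ) (H : ℕ) (p : SPath S A) : ℝ :=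
  treeVal M γ ψ u (H - p.2.length) p

/-- `Q^ψ_u(s;a)` at a root node. -/
noncomputable def QrootCF (M : MDP S A) (γ : ℝ) (ψ : SPath S A → Finset A)
    (u : S → ℝ) (H : ℕ) (s : S) (a : A) : ℝ :=
  M.R s a + γ * ∑ s', M.P s a s' * Vt M γ ψ u H (extP (rootP s) a s')

/-- π' is a greedy root policy for the search tree of ψ with leaf evaluation u. -/
def IsGreedy (M : MDP S A) (γ : ℝ) (ψ : SPath S A → Finset A)
    (u : S → ℝ) (H : ℕ) (π' : S → A) : Prop :=
  ∀ s, π' s ∈ ψ (rootP s) ∧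
    ∀ a ∈ ψ (rootP s), QrootCF M γ ψ u H s a ≤ QrootCF M γ ψ u H s (π' s)

/-- `V` is the value function of the stationary policy π. -/
def IsValue (M : MDP S A) (γ : ℝ) (π : S → A) (V : S → ℝ) : Prop :=
  ∀ s, V s = M.R s (π s) + γ * ∑ s', M.P s (π s) s' * V s'

/-- Policy-restricted Bellman backup `B_π[V](s)`. -/
noncomputable def Bpol (M : MDP S A) (γ : ℝ) (π : S → A) (V : S → ℝ) (s : S) : ℝ :=
  M.R s (π s) + γ * ∑ s', M.P s (π s) s' * V s'

lemma satCF_ext {ψ : SPath S A → Finset A} {p : SPath S A} (hsat : SatCF ψ p)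
    {a : A} (ha : a ∈ ψ p) (s' : S) : SatCF ψ (extP p a s') := by
  intro n hn
  have hn' : n < p.2.length + 1 := by
    simpa [extP] using hn
  show ((p.2 ++ [(a, s')]).get ⟨n, hn⟩).1 ∈ ψ (p.1, List.take n (p.2 ++ [(a, s')]))
  rcases lt_or_ge n p.2.length with hlt | hge
  · have hget : (p.2 ++ [(a, s')]).get ⟨n, hn⟩ = p.2.get ⟨n, hlt⟩ := by
      simp [List.get_eq_getElem, List.getElem_append_left hlt]
    rw [hget, List.take_append_of_le_length (le_of_lt hlt)]
    exact hsat n hlt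
  · have hne : n = p.2.length := by omega
    subst hne
    have hget : (p.2 ++ [(a, s')]).get ⟨p.2.length, hn⟩ = (a, s') := by
      simp [List.get_eq_getElem, List.getElem_append_right (le_refl p.2.length)]
    rw [hget, List.take_left]
    exact ha

lemma curS_ext (p : SPath S A) (a : A) (s' : S) : curS (extP p a s') = s' := by
  simp [curS, extP]

variable [Fintype S] [Fintype A] in
lemma key_lemma (M : MDP S A) (γ : ℝ) (hγ0 : 0 ≤ γ) (hγ1 : γ < 1)
    (ψ : SPath S A → Finset A) (H h : ℕ)
    (hmin : MinLeaf ψ h) (hhH : h ≤ H)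
    (u u' : S → ℝ) (ε : ℝ) (hε : 0 ≤ ε) (hu : ∀ s, |u s - u' s| ≤ ε) :
    ∀ n (p : SPath S A), SatCF ψ p → H ≤ n + p.2.length →
      |treeVal M γ ψ u n p - treeVal M γ ψ u' n p| ≤ ε * γ ^ (h - p.2.length) := by
  intro n
  induction n with
  | zero =>
    intro p hsat hH
    simp only [treeVal]
    have : h - p.2.length = 0 := by omega
    rw [this, pow_zero, mul_one]
    exact hu _
  | succ n ih =>
    intro p hsat hH
    simp only [treeVal]
    by_cases hne : (ψ p).Nonempty
    · rw [dif_pos hne, dif_pos hne]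
      have hpow : γ * (ε * γ ^ (h - (p.2.length + 1))) ≤ ε * γ ^ (h - p.2.length) := by
        rcases le_or_gt h p.2.length with hc | hc
        · have h1 : h - (p.2.length + 1) = 0 := by omega
          have h2 : h - p.2.length = 0 := by omega
          simp only [h1, h2, pow_zero, mul_one]
          nlinarith [mul_nonneg hε (sub_nonneg.mpr hγ1.le)]
        · have heq : h - p.2.length = (h - (p.2.length + 1)) + 1 := by omega
          rw [heq, pow_succ]
          exact le_of_eq (by ring)
      -- bound each argument difference
      have hbound : ∀ a ∈ ψ p,
          |(M.R (curS p) a + γ * ∑ s', M.P (curS p) a s' * treeVal M γ ψ u n (extP p a s'))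
           - (M.R (curS p) a + γ * ∑ s', M.P (curS p) a s' * treeVal M γ ψ u' n (extP p a s'))|
          ≤ ε * γ ^ (h - p.2.length) := by
        intro a ha
        have hsum : ∀ s', |treeVal M γ ψ u n (extP p a s') - treeVal M γ ψ u' n (extP p a s')|
            ≤ ε * γ ^ (h - (p.2.length + 1)) := by
          intro s'
          have := ih (extP p a s') (satCF_ext hsat ha s') (by
            simp only [extP, List.length_append, List.length_cons]; omega)
          simpa [extP] using this
        have hcalc : |(M.R (curS p) a + γ * ∑ s', M.P (curS p) a s' * treeVal M γ ψ u n (extP p a s'))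
           - (M.R (curS p) a + γ * ∑ s', M.P (curS p) a s' * treeVal M γ ψ u' n (extP p a s'))|
           = γ * |∑ s', M.P (curS p) a s' * (treeVal M γ ψ u n (extP p a s') - treeVal M γ ψ u' n (extP p a s'))| := by
          have hsplit : (M.R (curS p) a + γ * ∑ s', M.P (curS p) a s' * treeVal M γ ψ u n (extP p a s'))
              - (M.R (curS p) a + γ * ∑ s', M.P (curS p) a s' * treeVal M γ ψ u' n (extP p a s'))
              = γ * ∑ s', M.P (curS p) a s' * (treeVal M γ ψ u n (extP p a s') - treeVal M γ ψ u' n (extP p a s')) := by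
            rw [show (∑ s', M.P (curS p) a s' * (treeVal M γ ψ u n (extP p a s') - treeVal M γ ψ u' n (extP p a s')))
                = (∑ s', M.P (curS p) a s' * treeVal M γ ψ u n (extP p a s'))
                  - (∑ s', M.P (curS p) a s' * treeVal M γ ψ u' n (extP p a s')) from by
              rw [← Finset.sum_sub_distrib]; congr 1; funext s'; ring]
            ring
          rw [hsplit, abs_mul, abs_of_nonneg hγ0]
        rw [hcalc]
        calc γ * |∑ s', M.P (curS p) a s' * (treeVal M γ ψ u n (extP p a s') - treeVal M γ ψ u' n (extP p a s'))|
            ≤ γ * ∑ s', M.P (curS p) a s' * (ε * γ ^ (h - (p.2.length + 1))) := by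
              apply mul_le_mul_of_nonneg_left _ hγ0
              calc |∑ s', M.P (curS p) a s' * (treeVal M γ ψ u n (extP p a s') - treeVal M γ ψ u' n (extP p a s'))|
                  ≤ ∑ s', |M.P (curS p) a s' * (treeVal M γ ψ u n (extP p a s') - treeVal M γ ψ u' n (extP p a s'))| :=
                    Finset.abs_sum_le_sum_abs _ _
                _ ≤ ∑ s', M.P (curS p) a s' * (ε * γ ^ (h - (p.2.length + 1))) := by
                    apply Finset.sum_le_sum
                    intro s' _
                    rw [abs_mul, abs_of_nonneg (M.P_nonneg _ _ _)]
                    exact mul_le_mul_of_nonneg_left (hsum s') (M.P_nonneg _ _ _)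
          _ = γ * (ε * γ ^ (h - (p.2.length + 1))) := by
              rw [← Finset.sum_mul, M.P_sum, one_mul]
          _ ≤ ε * γ ^ (h - p.2.length) := hpow
      rw [abs_sub_le_iff]
      constructor
      · rw [sub_le_iff_le_add]
        apply Finset.sup'_le
        intro a ha
        have h1 := (abs_sub_le_iff.mp (hbound a ha)).1
        have h2 := Finset.le_sup' (f := fun a =>
          M.R (curS p) a + γ * ∑ s', M.P (curS p) a s' * treeVal M γ ψ u' n (extP p a s')) ha
        linarith [sub_le_iff_le_add.mp h1]
      · rw [sub_le_iff_le_add]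
        apply Finset.sup'_le
        intro a ha
        have h1 := (abs_sub_le_iff.mp (hbound a ha)).2
        have h2 := Finset.le_sup' (f := fun a =>
          M.R (curS p) a + γ * ∑ s', M.P (curS p) a s' * treeVal M γ ψ u n (extP p a s')) ha
        linarith [sub_le_iff_le_add.mp h1]
    · rw [dif_neg hne, dif_neg hne]
      have hempty : ψ p = ∅ := Finset.not_nonempty_iff_eq_empty.mp hne
      have := hmin p hsat hempty
      have h0 : h - p.2.length = 0 := by omega
      rw [h0, pow_zero, mul_one]
      exact hu _

/-- Lemma 3 (contraction): if `‖u − u'‖_∞ ≤ ε` then for any tree path with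
`|p;s| ≤ h(ψ)`, `|V^ψ_u(p;s) − V^ψ_{u'}(p;s)| ≤ ε·γ^(h(ψ)−|p;s|)`. -/
theorem stmt_4 {S A : Type} [Fintype S] [Fintype A]
    (M : MDP S A) (γ : ℝ) (hγ0 : 0 ≤ γ) (hγ1 : γ < 1)
    (ψ : SPath S A → Finset A) (H h : ℕ)
    (hfin : HorizonLE ψ H) (hmin : MinLeaf ψ h) (hhH : h ≤ H)
    (u u' : S → ℝ) (ε : ℝ) (hu : ∀ s, |u s - u' s| ≤ ε)
    (p : SPath S A) (hsat : SatCF ψ p) (hlen : p.2.length ≤ h) :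
    |Vt M γ ψ u H p - Vt M γ ψ u' H p| ≤ ε * γ ^ (h - p.2.length) := by
  have hε : 0 ≤ ε := le_trans (abs_nonneg _) (hu p.1)
  exact key_lemma M γ hγ0 hγ1 ψ H h hmin hhH u u' ε hε hu (H - p.2.length) p hsat (by omega)
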